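/- In R^Λ(n), let ν ∈ I^n and 1 ≤ i ≤ n−1 with ν_i = ν_{i+1}. If x_i² e(ν) = 0, then x_{i+1} e(ν) = −x_i e(ν). -/

import Mathlib

noncomputable section

open scoped TensorProduct

namespace QHApaper




/-! ## Representation type notions -/

/-- A module is indecomposable iff it is nontrivial and its only idempotent
endomorphisms are `0` and `id`. -/
def IsIndecomposable (A : Type) [Ring A] (M : Type) [AddCommGroup M] [Module A M] : Prop :=
  Nontrivial M ∧ ∀ f : M →ₗ[A] M, f ∘ₗ f = f → f = 0 ∨ f = LinearMap.id

/-- `A` has finite representation type over `R`: up to isomorphism there are only finitely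
many finite-dimensional indecomposable `A`-modules. -/
def HasFiniteRepType (R A : Type) [Field R] [Ring A] [Algebra R A] : Prop :=
  ∃ (r : ℕ) (M : Fin r → ModuleCat.{0} A),
    ∀ (N : Type) [AddCommGroup N] [Module R N] [Module A N] [IsScalarTower R A N],
      FiniteDimensional R N → IsIndecomposable A N → ∃ i, Nonempty (N ≃ₗ[A] M i)

/-- The tensor product `M ⊗_B N` of an `(A,B)`-bimodule `M` with a left `B`-module `N`,
realized as the quotient of `M ⊗_R N` by the usual middle-linearity relations.  It is a
left `A`-module. -/
abbrev TensorBimod (R A B : Type) [CommRing R] [Ring A] [Ring B] [Algebra R A] [Algebra R B]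
    (M : Type) [AddCommGroup M] [Module R M] [Module A M] [Module Bᵐᵒᵖ M] [IsScalarTower R A M]
    (N : Type) [AddCommGroup N] [Module R N] [Module B N] : Type :=
  (M ⊗[R] N) ⧸ Submodule.span A
    {x : M ⊗[R] N | ∃ (m : M) (b : B) (y : N), x = (MulOpposite.op b • m) ⊗ₜ[R] y - m ⊗ₜ[R] (b • y)}

/-- An `(A,B)`-bimodule which is finitely generated and free as a right `B`-module. -/
structure BimodOver (R A B : Type) [CommRing R] [Ring A] [Ring B] [Algebra R A] [Algebra R B] :
    Type 1 where
  carrier : Type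
  [iag : AddCommGroup carrier]
  [imr : Module R carrier]
  [ima : Module A carrier]
  [imb : Module Bᵐᵒᵖ carrier]
  [ita : IsScalarTower R A carrier]
  [itb : IsScalarTower R Bᵐᵒᵖ carrier]
  [icomm : SMulCommClass A Bᵐᵒᵖ carrier]
  free : Module.Free Bᵐᵒᵖ carrier
  fg : Module.Finite Bᵐᵒᵖ carrier

/-- The free associative algebra `R⟨X,Y⟩` on two generators. -/
abbrev FreeTwo (R : Type) [Field R] : Type := FreeAlgebra R (Fin 2)

/-- A witness for wildness: an `(A, R⟨X,Y⟩)`-bimodule, f.g. free as right `R⟨X,Y⟩`-module,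
such that `M ⊗_{R⟨X,Y⟩} -` preserves indecomposability and reflects isomorphism on
finite-dimensional modules. -/
structure WildWitness (R A : Type) [Field R] [Ring A] [Algebra R A] : Type 1 where
  W : BimodOver R A (FreeTwo R)
  preserves : ∀ (N : Type) [AddCommGroup N] [Module R N] [Module (FreeTwo R) N]
      [IsScalarTower R (FreeTwo R) N], FiniteDimensional R N →
      IsIndecomposable (FreeTwo R) N →
      letI := W.iag; letI := W.imr; letI := W.ima; letI := W.imb; letI := W.ita
      IsIndecomposable A (TensorBimod R A (FreeTwo R) W.carrier N)
  reflects : ∀ (N N' : Type) [AddCommGroup N] [Module R N] [Module (FreeTwo R) N]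
      [IsScalarTower R (FreeTwo R) N] [AddCommGroup N'] [Module R N'] [Module (FreeTwo R) N']
      [IsScalarTower R (FreeTwo R) N'],
      FiniteDimensional R N → FiniteDimensional R N' →
      (letI := W.iag; letI := W.imr; letI := W.ima; letI := W.imb; letI := W.ita
       Nonempty ((TensorBimod R A (FreeTwo R) W.carrier N) ≃ₗ[A]
         (TensorBimod R A (FreeTwo R) W.carrier N'))) →
      Nonempty (N ≃ₗ[FreeTwo R] N')

/-- `A` has wild representation type over `R`. -/
def HasWildRepType (R A : Type) [Field R] [Ring A] [Algebra R A] : Prop :=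
  Nonempty (WildWitness R A)

/-- `R[T]/(T - c)` as a module over `R[T]`. -/
abbrev PolyQuot (R : Type) [Field R] (c : R) : Type :=
  Polynomial R ⧸ Ideal.span {Polynomial.X - Polynomial.C c}

/-- A witness for tameness in dimension `d`: finitely many `(A, R[T])`-bimodules, each
f.g. free as right `R[T]`-module, such that every `d`-dimensional indecomposable
`A`-module is of the form `M_i ⊗_{R[T]} R[T]/(T-c)`. -/
structure TameWitness (R A : Type) [Field R] [Ring A] [Algebra R A] (d : ℕ) : Type 1 where
  r : ℕ
  M : Fin r → BimodOver R A (Polynomial R)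
  cover : ∀ (L : Type) [AddCommGroup L] [Module R L] [Module A L] [IsScalarTower R A L],
    FiniteDimensional R L → Module.finrank R L = d → IsIndecomposable A L →
    ∃ (i : Fin r) (c : R),
      letI := (M i).iag; letI := (M i).imr; letI := (M i).ima; letI := (M i).imb
      letI := (M i).ita
      Nonempty (L ≃ₗ[A] TensorBimod R A (Polynomial R) (M i).carrier (PolyQuot R c))

/-- `A` has tame representation type over `R`. -/
def HasTameRepType (R A : Type) [Field R] [Ring A] [Algebra R A] : Prop :=
  ¬ HasFiniteRepType R A ∧ ∀ d : ℕ, 1 ≤ d → Nonempty (TameWitness R A d)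

/-! ## The cyclotomic quiver Hecke algebra of affine type A by generators and relations -/

/-- Generators: idempotents `E ν` for `ν ∈ I^n` (`I = ℤ/(ℓ+1)ℤ`),
polynomial generators `X k` and intertwiners `Psi k`. -/
inductive Gen (ℓ n : ℕ) : Type where
  | E (ν : Fin n → ZMod (ℓ + 1))
  | X (k : Fin n)
  | Psi (k : Fin (n - 1))

variable (R : Type) [Field R]

/-- The free algebra on the generators. -/
abbrev FA (ℓ n : ℕ) : Type := FreeAlgebra R (Gen ℓ n)

def eF (ℓ n : ℕ) (ν : Fin n → ZMod (ℓ + 1)) : FA R ℓ n := FreeAlgebra.ι R (Gen.E ν)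
def xF (ℓ n : ℕ) (k : Fin n) : FA R ℓ n := FreeAlgebra.ι R (Gen.X k)
def pF (ℓ n : ℕ) (k : Fin (n - 1)) : FA R ℓ n := FreeAlgebra.ι R (Gen.Psi k)

/-- The position `k` (0-based) as an element of `Fin n`. -/
def idx0 {n : ℕ} (k : Fin (n - 1)) : Fin n := ⟨k.val, by have := k.isLt; omega⟩
/-- The position `k+1` (0-based) as an element of `Fin n`. -/
def idx1 {n : ℕ} (k : Fin (n - 1)) : Fin n := ⟨k.val + 1, by have := k.isLt; omega⟩

/-- The action of the transposition `s_k` on `I^n`. -/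
def sSwap {ℓ n : ℕ} (k : Fin (n - 1)) (ν : Fin n → ZMod (ℓ + 1)) : Fin n → ZMod (ℓ + 1) :=
  ν ∘ Equiv.swap (idx0 k) (idx1 k)

/-- Evaluation of a (commutative) polynomial in `m` variables at a tuple of elements of the
free algebra, monomials expanded in the order `v 0, v 1, …`. -/
def evalP {ℓ n m : ℕ} (p : MvPolynomial (Fin m) R) (v : Fin m → FA R ℓ n) : FA R ℓ n :=
  Finsupp.sum (AddMonoidAlgebra.coeff p) fun s a => a • ((List.finRange m).map fun i => v i ^ s i).prod

/-- The divided difference `(p(u,v) - p(w,v))/(u - w)` as a polynomial in three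
variables `u = X 0`, `v = X 1`, `w = X 2`. -/
def divDiff (p : MvPolynomial (Fin 2) R) : MvPolynomial (Fin 3) R :=
  Finsupp.sum (AddMonoidAlgebra.coeff p) fun s a =>
    MvPolynomial.C a *
      (∑ t ∈ Finset.range (s 0), MvPolynomial.X 0 ^ t * MvPolynomial.X 2 ^ (s 0 - 1 - t)) *
      MvPolynomial.X 1 ^ (s 1)

/-- The weight (element of `Q⁺`, recorded by its coordinates in the simple roots)
of a tuple `ν ∈ I^n`. -/
def wt (ℓ n : ℕ) (ν : Fin n → ZMod (ℓ + 1)) : ZMod (ℓ + 1) → ℕ :=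
  ∑ k : Fin n, Pi.single (ν k) 1

/-- The defining relations of the cyclotomic quiver Hecke algebra attached to a family of
polynomials `Qf`, a dominant integral weight `Λ` (given by its coordinates `⟨h_i, Λ⟩`), and a
predicate `P` singling out the allowed tuples `ν` (for `R^Λ(β)` take `P ν := wt ν = β`;
for `R^Λ(n)` take `P := fun _ => True`). -/
inductive Rel (ℓ n : ℕ) (Qf : ZMod (ℓ + 1) → ZMod (ℓ + 1) → MvPolynomial (Fin 2) R)
    (Λ : ZMod (ℓ + 1) → ℕ) (P : (Fin n → ZMod (ℓ + 1)) → Prop) :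
    FA R ℓ n → FA R ℓ n → Prop where
  | idem (ν) : Rel ℓ n Qf Λ P (eF R ℓ n ν * eF R ℓ n ν) (eF R ℓ n ν)
  | orth (ν ν') (h : ν ≠ ν') : Rel ℓ n Qf Λ P (eF R ℓ n ν * eF R ℓ n ν') 0
  | unit : Rel ℓ n Qf Λ P (∑ ν : Fin n → ZMod (ℓ + 1), eF R ℓ n ν) 1
  | xComm (k l : Fin n) : Rel ℓ n Qf Λ P (xF R ℓ n k * xF R ℓ n l) (xF R ℓ n l * xF R ℓ n k)
  | xE (k : Fin n) (ν) : Rel ℓ n Qf Λ P (xF R ℓ n k * eF R ℓ n ν) (eF R ℓ n ν * xF R ℓ n k)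
  | psiE (k : Fin (n - 1)) (ν) :
      Rel ℓ n Qf Λ P (pF R ℓ n k * eF R ℓ n ν) (eF R ℓ n (sSwap k ν) * pF R ℓ n k)
  | psiComm (k l : Fin (n - 1)) (h : k.val + 1 < l.val ∨ l.val + 1 < k.val) :
      Rel ℓ n Qf Λ P (pF R ℓ n k * pF R ℓ n l) (pF R ℓ n l * pF R ℓ n k)
  | psiSq (k : Fin (n - 1)) (ν) :
      Rel ℓ n Qf Λ P (pF R ℓ n k * pF R ℓ n k * eF R ℓ n ν)
        (evalP R (Qf (ν (idx0 k)) (ν (idx1 k)))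
          ![xF R ℓ n (idx0 k), xF R ℓ n (idx1 k)] * eF R ℓ n ν)
  | psiX (k : Fin (n - 1)) (l : Fin n) (ν) (h : l ≠ idx0 k) (h' : l ≠ idx1 k) :
      Rel ℓ n Qf Λ P (pF R ℓ n k * xF R ℓ n l * eF R ℓ n ν)
        (xF R ℓ n l * pF R ℓ n k * eF R ℓ n ν)
  | psiX1 (k : Fin (n - 1)) (ν) :
      Rel ℓ n Qf Λ P (pF R ℓ n k * xF R ℓ n (idx1 k) * eF R ℓ n ν)
        ((xF R ℓ n (idx0 k) * pF R ℓ n k +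
          if ν (idx0 k) = ν (idx1 k) then 1 else 0) * eF R ℓ n ν)
  | xPsi (k : Fin (n - 1)) (ν) :
      Rel ℓ n Qf Λ P (xF R ℓ n (idx1 k) * pF R ℓ n k * eF R ℓ n ν)
        ((pF R ℓ n k * xF R ℓ n (idx0 k) +
          if ν (idx0 k) = ν (idx1 k) then 1 else 0) * eF R ℓ n ν)
  | braid (k k' : Fin (n - 1)) (h : k'.val = k.val + 1) (ν) :
      Rel ℓ n Qf Λ P
        ((pF R ℓ n k' * pF R ℓ n k * pF R ℓ n k' - pF R ℓ n k * pF R ℓ n k' * pF R ℓ n k) *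
          eF R ℓ n ν)
        ((if ν (idx0 k) = ν (idx1 k') then 1 else 0) *
          evalP R (divDiff R (Qf (ν (idx0 k)) (ν (idx1 k))))
            ![xF R ℓ n (idx0 k), xF R ℓ n (idx1 k), xF R ℓ n (idx1 k')] * eF R ℓ n ν)
  | cyclo (h0 : 0 < n) (ν) :
      Rel ℓ n Qf Λ P (xF R ℓ n ⟨0, h0⟩ ^ (Λ (ν ⟨0, h0⟩)) * eF R ℓ n ν) 0
  | support (ν) (h : ¬ P ν) : Rel ℓ n Qf Λ P (eF R ℓ n ν) 0

/-- The cyclotomic quiver Hecke algebra presented by the above generators and relations. -/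
abbrev qha (ℓ n : ℕ) (Qf : ZMod (ℓ + 1) → ZMod (ℓ + 1) → MvPolynomial (Fin 2) R)
    (Λ : ZMod (ℓ + 1) → ℕ) (P : (Fin n → ZMod (ℓ + 1)) → Prop) : Type :=
  RingQuot (Rel R ℓ n Qf Λ P)

/-- The canonical map from the free algebra onto the cyclotomic quiver Hecke algebra. -/
abbrev mkQ (ℓ n : ℕ) (Qf : ZMod (ℓ + 1) → ZMod (ℓ + 1) → MvPolynomial (Fin 2) R)
    (Λ : ZMod (ℓ + 1) → ℕ) (P : (Fin n → ZMod (ℓ + 1)) → Prop) :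
    FA R ℓ n →ₐ[R] qha R ℓ n Qf Λ P :=
  RingQuot.mkAlgHom R (Rel R ℓ n Qf Λ P)

/-- The standard form of the polynomials `Q_{ij}` in affine type `A_ℓ^{(1)}`,
with parameter `lam`.  Here `u = X 0` and `v = X 1`. -/
def Qstd (ℓ : ℕ) (lam : R) (i j : ZMod (ℓ + 1)) : MvPolynomial (Fin 2) R :=
  if i = j then 0
  else if ℓ = 1 then
    MvPolynomial.X 0 ^ 2 + MvPolynomial.C lam * (MvPolynomial.X 0 * MvPolynomial.X 1) +
      MvPolynomial.X 1 ^ 2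
  else if j = i + 1 then
    (if i = (ℓ : ZMod (ℓ + 1)) then MvPolynomial.X 0 + MvPolynomial.C lam * MvPolynomial.X 1
     else MvPolynomial.X 0 + MvPolynomial.X 1)
  else if i = j + 1 then
    (if j = (ℓ : ZMod (ℓ + 1)) then MvPolynomial.X 1 + MvPolynomial.C lam * MvPolynomial.X 0
     else MvPolynomial.X 0 + MvPolynomial.X 1)
  else 1

/-- The height of an element of `Q⁺`. -/
def ht (ℓ : ℕ) (β : ZMod (ℓ + 1) → ℕ) : ℕ := ∑ j, β j

/-- `R^Λ(β)` with the standard-form polynomials. -/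
abbrev cyc (ℓ : ℕ) (lam : R) (Λ β : ZMod (ℓ + 1) → ℕ) : Type :=
  qha R ℓ (ht ℓ β) (Qstd R ℓ lam) Λ (fun ν => wt ℓ (ht ℓ β) ν = β)

/-- The simple root `α_j`. -/
def αr (ℓ : ℕ) (j : ZMod (ℓ + 1)) : ZMod (ℓ + 1) → ℕ := Pi.single j 1

/-- The null root `δ = α_0 + ⋯ + α_ℓ`. -/
def δr (ℓ : ℕ) : ZMod (ℓ + 1) → ℕ := fun _ => 1

/-- `λ^s_i = Σ_{k=0}^{s} i α_k + Σ_{k=1}^{i−1} (i−k) α_{s+k} + Σ_{k=1}^{i−1} k α_{ℓ−i+1+k}`. -/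
def lamRoot (ℓ s i : ℕ) : ZMod (ℓ + 1) → ℕ :=
  (∑ k ∈ Finset.range (s + 1), i • αr ℓ (k : ZMod (ℓ + 1)))
  + (∑ k ∈ Finset.Icc 1 (i - 1), (i - k) • αr ℓ ((s : ZMod (ℓ + 1)) + (k : ZMod (ℓ + 1))))
  + (∑ k ∈ Finset.Icc 1 (i - 1),
      k • αr ℓ ((ℓ : ZMod (ℓ + 1)) - (i : ZMod (ℓ + 1)) + 1 + (k : ZMod (ℓ + 1))))

/-- `μ^s_i = Σ_{k=0}^{i−1} (i−k) α_k + Σ_{k=1}^{i−1} k α_{s−i+k} + Σ_{k=1}^{ℓ−s+1} i α_{s−1+k}`. -/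
def muRoot (ℓ s i : ℕ) : ZMod (ℓ + 1) → ℕ :=
  (∑ k ∈ Finset.range i, (i - k) • αr ℓ (k : ZMod (ℓ + 1)))
  + (∑ k ∈ Finset.Icc 1 (i - 1),
      k • αr ℓ ((s : ZMod (ℓ + 1)) - (i : ZMod (ℓ + 1)) + (k : ZMod (ℓ + 1))))
  + (∑ k ∈ Finset.Icc 1 (ℓ - s + 1),
      i • αr ℓ ((s : ZMod (ℓ + 1)) - 1 + (k : ZMod (ℓ + 1))))

/-- The coordinates of the level two weight `Λ_0 + Λ_s`. -/
def wtL (ℓ s : ℕ) : ZMod (ℓ + 1) → ℕ :=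
  fun j => (if j = 0 then 1 else 0) + (if j = (s : ZMod (ℓ + 1)) then 1 else 0)

/-- The coordinates of the weight `2Λ_0`. -/
def wt2L0 (ℓ : ℕ) : ZMod (ℓ + 1) → ℕ := fun j => if j = 0 then 2 else 0

/-- The Cartan matrix of affine type `A_ℓ^{(1)}`. -/
def cartan (ℓ : ℕ) (i j : ZMod (ℓ + 1)) : ℤ :=
  if i = j then 2
  else if ℓ = 1 then -2
  else if j = i + 1 ∨ i = j + 1 then -1
  else 0

/-- The category of finite-dimensional (over `R`) modules over the `R`-algebra `A`. -/
abbrev FdModCat (R A : Type) [Field R] [Ring A] [Algebra R A] :=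
  CategoryTheory.ObjectProperty.FullSubcategory
    (fun M : ModuleCat.{0} A => @FiniteDimensional R (RestrictScalars R A M) _ _ (RestrictScalars.module R A M))

/-!
Since `ν_i = ν_{i+1}`, the idempotent `e = e(ν)` commutes with `x = x_i`, `y = x_{i+1}` and
`ψ = ψ_i`, and on `e` these satisfy the nil-Hecke relations `ψ² e = 0`,
`ψ y e = (x ψ + 1) e`, `y ψ e = (ψ x + 1) e`. Moving `ψ` across `x²` gives
`0 = ψ x² e = y² ψ e - (x + y) e`, so `(x + y) e = y² ψ e` is killed by `ψ` on the right:
`(x + y) ψ e = ψ (x + y) e = 0`, and then also `ψ x y e = x y ψ e = 0`. Finally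
`(x + y) e = y ψ (x + y) e - ψ x (x + y) e = 0`.
-/

section RingIdentities

variable {A : Type*} [Ring A] {e x y ψ : A}

theorem psi_mul_mul_eq_of_commute (hyψ : y * ψ * e = ψ * x * e + e) {z : A} (hz : Commute z e) :
    ψ * x * z * e = y * ψ * z * e - z * e := by
  rw [hz.right_comm, hz.right_comm, hz.eq, ← sub_mul, hyψ, add_sub_cancel_right]

theorem add_mul_eq_mul_mul_psi_mul (hyψ : y * ψ * e = ψ * x * e + e) (hxe : Commute x e)
    (hxx : x * x * e = 0) : (x + y) * e = y * y * ψ * e := by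
  have hψxx : ψ * x * x * e = 0 := by rw [mul_assoc ψ x x, mul_assoc ψ, hxx, mul_zero]
  have hyψx : y * ψ * x * e = y * (y * ψ * e) - y * e := by
    rw [← mul_sub, ← eq_sub_of_add_eq hyψ.symm]; simp only [mul_assoc]
  rw [psi_mul_mul_eq_of_commute hyψ hxe, hyψx] at hψxx
  linear_combination (norm := (simp only [mul_assoc, add_mul]; abel)) -hψxx

theorem add_mul_psi_mul_eq_zero (hyψ : y * ψ * e = ψ * x * e + e) (hxe : Commute x e)
    (hψe : Commute ψ e) (hxx : x * x * e = 0) (hψψ : ψ * ψ * e = 0) :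
    (x + y) * ψ * e = 0 := by
  rw [hψe.right_comm, add_mul_eq_mul_mul_psi_mul hyψ hxe hxx, ← hψe.right_comm]
  simp only [mul_assoc] at hψψ ⊢
  rw [hψψ, mul_zero, mul_zero]

theorem psi_mul_add_mul_eq_zero (hyψ : y * ψ * e = ψ * x * e + e)
    (hψy : ψ * y * e = x * ψ * e + e) (hxe : Commute x e) (hψe : Commute ψ e)
    (hxx : x * x * e = 0) (hψψ : ψ * ψ * e = 0) : ψ * (x + y) * e = 0 := by
  have h := add_mul_psi_mul_eq_zero hyψ hxe hψe hxx hψψ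
  linear_combination (norm := (simp only [mul_add, add_mul]; abel)) h - hyψ + hψy

theorem mul_eq_neg_mul_of_mul_mul_eq_zero (hyψ : y * ψ * e = ψ * x * e + e)
    (hψy : ψ * y * e = x * ψ * e + e) (hxe : Commute x e) (hye : Commute y e)
    (hψe : Commute ψ e) (hxy : Commute x y) (hxx : x * x * e = 0) (hψψ : ψ * ψ * e = 0) :
    y * e = -(x * e) := by
  have hyψe : y * ψ * e = -(x * ψ * e) := by
    have h := add_mul_psi_mul_eq_zero hyψ hxe hψe hxx hψψ
    rw [add_mul, add_mul] at h
    exact eq_neg_of_add_eq_zero_right h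
  have hxyψ : x * y * ψ * e = 0 := by
    calc x * y * ψ * e = -(x * x * e * ψ) := by
          rw [mul_assoc x y, mul_assoc x (y * ψ), hyψe, mul_neg, hψe.right_comm]
          simp only [mul_assoc]
      _ = 0 := by rw [hxx, zero_mul, neg_zero]
  have hψxy : ψ * x * y * e = 0 := by
    calc ψ * x * y * e = y * (ψ * y * e) - y * e := by
          rw [psi_mul_mul_eq_of_commute hyψ hye]; simp only [mul_assoc]
      _ = x * y * ψ * e := by
          rw [hψy, mul_add, add_sub_cancel_right, hxy.eq]; simp only [mul_assoc]
      _ = 0 := hxyψ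
  have hyψs : y * ψ * (x + y) * e = 0 := by
    have h := psi_mul_add_mul_eq_zero hyψ hψy hxe hψe hxx hψψ
    simp only [mul_assoc] at h ⊢
    rw [h, mul_zero]
  have hψxx : ψ * x * x * e = 0 := by rw [mul_assoc ψ x x, mul_assoc ψ, hxx, mul_zero]
  have h := psi_mul_mul_eq_of_commute hyψ (hxe.add_left hye)
  linear_combination (norm := (simp only [mul_add, add_mul]; abel)) h - hψxx - hψxy + hyψs
end RingIdentities

theorem sSwap_eq_self {ℓ n : ℕ} {k : Fin (n - 1)} {ν : Fin n → ZMod (ℓ + 1)}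
    (h : ν (idx0 k) = ν (idx1 k)) : sSwap k ν = ν := by
  rw [sSwap, Equiv.comp_swap_eq_update, h, Function.update_eq_self, ← h, Function.update_eq_self]

@[simp]
theorem evalP_zero {ℓ n m : ℕ} (v : Fin m → FA R ℓ n) : evalP R 0 v = 0 := by
  simp [evalP]

theorem Qstd_of_eq (ℓ : ℕ) (lam : R) {i j : ZMod (ℓ + 1)} (h : i = j) : Qstd R ℓ lam i j = 0 :=
  if_pos h

section Relations

variable {R} {ℓ n : ℕ} {Qf : ZMod (ℓ + 1) → ZMod (ℓ + 1) → MvPolynomial (Fin 2) R}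
  {Λ : ZMod (ℓ + 1) → ℕ} {P : (Fin n → ZMod (ℓ + 1)) → Prop}

local notation "π" => mkQ R ℓ n Qf Λ P

theorem commute_mkQ_xF_eF (k : Fin n) (ν : Fin n → ZMod (ℓ + 1)) :
    Commute (π (xF R ℓ n k)) (π (eF R ℓ n ν)) := by
  rw [Commute, SemiconjBy, ← map_mul, ← map_mul]
  exact RingQuot.mkAlgHom_rel R (Rel.xE k ν)

theorem commute_mkQ_xF_xF (k l : Fin n) : Commute (π (xF R ℓ n k)) (π (xF R ℓ n l)) := by
  rw [Commute, SemiconjBy, ← map_mul, ← map_mul]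
  exact RingQuot.mkAlgHom_rel R (Rel.xComm k l)

variable {k : Fin (n - 1)} {ν : Fin n → ZMod (ℓ + 1)}

theorem commute_mkQ_pF_eF (h : ν (idx0 k) = ν (idx1 k)) :
    Commute (π (pF R ℓ n k)) (π (eF R ℓ n ν)) := by
  have hrel := RingQuot.mkAlgHom_rel R (Rel.psiE (Qf := Qf) (Λ := Λ) (P := P) k ν)
  rw [sSwap_eq_self h, map_mul, map_mul] at hrel
  exact hrel

theorem mkQ_pF_mul_pF_mul_eF (hQ : Qf (ν (idx0 k)) (ν (idx1 k)) = 0) :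
    π (pF R ℓ n k) * π (pF R ℓ n k) * π (eF R ℓ n ν) = 0 := by
  have hrel := RingQuot.mkAlgHom_rel R (Rel.psiSq (Qf := Qf) (Λ := Λ) (P := P) k ν)
  rw [hQ, evalP_zero, zero_mul, map_zero] at hrel
  simpa only [map_mul] using hrel

theorem mkQ_pF_mul_xF_mul_eF (h : ν (idx0 k) = ν (idx1 k)) :
    π (pF R ℓ n k) * π (xF R ℓ n (idx1 k)) * π (eF R ℓ n ν) =
      π (xF R ℓ n (idx0 k)) * π (pF R ℓ n k) * π (eF R ℓ n ν) + π (eF R ℓ n ν) := by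
  have hrel := RingQuot.mkAlgHom_rel R (Rel.psiX1 (Qf := Qf) (Λ := Λ) (P := P) k ν)
  rw [if_pos h] at hrel
  simpa only [map_mul, map_add, map_one, add_mul, one_mul] using hrel

theorem mkQ_xF_mul_pF_mul_eF (h : ν (idx0 k) = ν (idx1 k)) :
    π (xF R ℓ n (idx1 k)) * π (pF R ℓ n k) * π (eF R ℓ n ν) =
      π (pF R ℓ n k) * π (xF R ℓ n (idx0 k)) * π (eF R ℓ n ν) + π (eF R ℓ n ν) := by
  have hrel := RingQuot.mkAlgHom_rel R (Rel.xPsi (Qf := Qf) (Λ := Λ) (P := P) k ν)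
  rw [if_pos h] at hrel
  simpa only [map_mul, map_add, map_one, add_mul, one_mul] using hrel

theorem mkQ_xF_idx1_mul_eF_eq_neg (h : ν (idx0 k) = ν (idx1 k))
    (hQ : Qf (ν (idx0 k)) (ν (idx1 k)) = 0)
    (hsq : π (xF R ℓ n (idx0 k) * xF R ℓ n (idx0 k) * eF R ℓ n ν) = 0) :
    π (xF R ℓ n (idx1 k) * eF R ℓ n ν) = -π (xF R ℓ n (idx0 k) * eF R ℓ n ν) := by
  simp only [map_mul] at hsq ⊢
  exact mul_eq_neg_mul_of_mul_mul_eq_zero (mkQ_xF_mul_pF_mul_eF h) (mkQ_pF_mul_xF_mul_eF h)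
    (commute_mkQ_xF_eF _ ν) (commute_mkQ_xF_eF _ ν) (commute_mkQ_pF_eF h)
    (commute_mkQ_xF_xF _ _) hsq (mkQ_pF_mul_pF_mul_eF hQ)

end Relations

theorem formula_three_general (R : Type) [Field R] (ℓ : ℕ)
    (lam : R)
    (n : ℕ) (Λ : ZMod (ℓ + 1) → ℕ) (ν : Fin n → ZMod (ℓ + 1)) (p : Fin (n - 1))
    (heq : ν (idx0 p) = ν (idx1 p))
    (h : mkQ R ℓ n (Qstd R ℓ lam) Λ (fun _ => True)
          (xF R ℓ n (idx0 p) * xF R ℓ n (idx0 p) * eF R ℓ n ν) = 0) :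
    mkQ R ℓ n (Qstd R ℓ lam) Λ (fun _ => True) (xF R ℓ n (idx1 p) * eF R ℓ n ν) =
      - mkQ R ℓ n (Qstd R ℓ lam) Λ (fun _ => True) (xF R ℓ n (idx0 p) * eF R ℓ n ν) :=
  mkQ_xF_idx1_mul_eF_eq_neg heq (Qstd_of_eq R ℓ lam heq) h

/-- If `ν_i = ν_{i+1}` and `x_i² e(ν) = 0` then `x_{i+1} e(ν) = -x_i e(ν)`. -/
theorem formula_three (R : Type) [Field R] [IsAlgClosed R] (ℓ : ℕ) (hℓ : 1 ≤ ℓ)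
    (lam : R) (hlam : 2 ≤ ℓ → lam ≠ 0)
    (n : ℕ) (Λ : ZMod (ℓ + 1) → ℕ) (ν : Fin n → ZMod (ℓ + 1)) (p : Fin (n - 1))
    (heq : ν (idx0 p) = ν (idx1 p))
    (h : mkQ R ℓ n (Qstd R ℓ lam) Λ (fun _ => True)
          (xF R ℓ n (idx0 p) * xF R ℓ n (idx0 p) * eF R ℓ n ν) = 0) :
    mkQ R ℓ n (Qstd R ℓ lam) Λ (fun _ => True) (xF R ℓ n (idx1 p) * eF R ℓ n ν) =
      - mkQ R ℓ n (Qstd R ℓ lam) Λ (fun _ => True) (xF R ℓ n (idx0 p) * eF R ℓ n ν) :=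
  formula_three_general R ℓ lam n Λ ν p heq h

end QHApaper
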